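/- arXiv:math/0702332 — 2 statements merged into one kernel-verified Lean document; each statement's English description precedes it below -/
import Mathlib

section
/- Let $n \ge 2$, $0 < \varepsilon < 1/2$, and let $v(x) = -\log|x + \varepsilon e_n|$ on $S^{n-1}(e_n,1)$ (the sphere of radius 1 centered at $e_n$). For $s \ge 0$ let $E_s = \{x \in S^{n-1}(e_n,1) : |v(x)| \ge s\}$. Then there is a constant $C(n) > 0$ such that $\mathcal{H}^{n-1}(E_s) \ge C(n) \exp((1-n)s)$ for all $0 \le s \le \log(1/(2\varepsilon))$. -/
open MeasureTheory Metric Set Filter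
open scoped ENNReal Topology
open scoped NNReal

set_option maxHeartbeats 1000000

noncomputable section

abbrev En (n : ℕ) := EuclideanSpace ℝ (Fin n)

variable {m : ℕ}


variable {m : ℕ}

def ins (j : Fin (m+1)) (c : ℝ) (y : En m) : En (m+1) := WithLp.toLp 2 (Fin.insertNth (α := fun _ => ℝ) j c y)

def proj (j : Fin (m+1)) (x : En (m+1)) : En m := WithLp.toLp 2 (fun i => x (j.succAbove i))

lemma normsq (x : En m) : ‖x‖^2 = ∑ i, (x i)^2 := by
  rw [EuclideanSpace.norm_eq, Real.sq_sqrt (by positivity)]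
  simp [Real.norm_eq_abs, sq_abs]

lemma ins_apply_same (j : Fin (m+1)) (c : ℝ) (y : En m) : ins j c y j = c :=
  Fin.insertNth_apply_same (α := fun _ => ℝ) j c y

lemma ins_apply_succAbove (j : Fin (m+1)) (c : ℝ) (y : En m) (i : Fin m) :
    ins j c y (j.succAbove i) = y i :=
  Fin.insertNth_apply_succAbove (α := fun _ => ℝ) j c y i

lemma norm_ins_sq (j : Fin (m+1)) (c : ℝ) (y : En m) :
    ‖ins j c y‖^2 = c^2 + ‖y‖^2 := by
  rw [normsq, normsq, Fin.sum_univ_succAbove _ j, ins_apply_same]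
  simp [ins_apply_succAbove]

lemma ins_sub (j : Fin (m+1)) (c c' : ℝ) (y y' : En m) :
    ins j c y - ins j c' y' = ins j (c - c') (y - y') := by
  ext k
  have : ((ins j c y - ins j c' y') : En (m+1)) k = ins j c y k - ins j c' y' k := rfl
  rw [this]
  rcases eq_or_ne k j with rfl | hk
  · simp [ins_apply_same]
  · obtain ⟨i, rfl⟩ := Fin.exists_succAbove_eq hk
    simp only [ins_apply_succAbove]
    rfl

lemma dist_ins_sq (j : Fin (m+1)) (c c' : ℝ) (y y' : En m) :
    dist (ins j c y) (ins j c' y') ^ 2 = (c - c')^2 + dist y y' ^2 := by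
  rw [dist_eq_norm, dist_eq_norm, ins_sub, norm_ins_sq]

lemma lip_proj (j : Fin (m+1)) : LipschitzWith 1 (proj j) := by
  apply LipschitzWith.of_dist_le_mul
  intro x y
  rw [NNReal.coe_one, one_mul, EuclideanSpace.dist_eq, EuclideanSpace.dist_eq]
  apply Real.sqrt_le_sqrt
  rw [Fin.sum_univ_succAbove (fun k => dist (x k) (y k) ^ 2) j]
  have : ∀ i : Fin m, dist (proj j x i) (proj j y i) ^2 = dist (x (j.succAbove i)) (y (j.succAbove i)) ^ 2 := fun i => rfl
  simp only [this]
  exact le_add_of_nonneg_left (by positivity)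

instance haarEn (m : ℕ) : ((μH[(m:ℝ)] : Measure (En m))).IsAddHaarMeasure := by
  have h := isAddHaarMeasure_hausdorffMeasure (E := En m)
  rwa [finrank_euclideanSpace_fin] at h

-- sqrt difference bound
lemma sqrt_diff_le {u v b : ℝ} (hb : 0 < b) (hu : b^2 ≤ u) (hv : b^2 ≤ v) :
    |Real.sqrt u - Real.sqrt v| ≤ |u - v| / (2*b) := by
  have hu0 : (0:ℝ) ≤ u := le_trans (by positivity) hu
  have hv0 : (0:ℝ) ≤ v := le_trans (by positivity) hv
  have hsu : Real.sqrt u ^ 2 = u := Real.sq_sqrt hu0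
  have hsv : Real.sqrt v ^ 2 = v := Real.sq_sqrt hv0
  have hbu : b ≤ Real.sqrt u := by
    have := Real.sqrt_le_sqrt hu
    rwa [Real.sqrt_sq hb.le] at this
  have hbv : b ≤ Real.sqrt v := by
    have := Real.sqrt_le_sqrt hv
    rwa [Real.sqrt_sq hb.le] at this
  rw [le_div_iff₀ (by positivity)]
  have key : |Real.sqrt u - Real.sqrt v| * (Real.sqrt u + Real.sqrt v) = |u - v| := by
    rw [← abs_of_nonneg (a := Real.sqrt u + Real.sqrt v) (by positivity), ← abs_mul]
    congr 1
    nlinarith [hsu, hsv]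
  nlinarith [abs_nonneg (Real.sqrt u - Real.sqrt v), key]

lemma sphere_fin (m : ℕ) (e : En (m+1)) : μH[(m:ℝ)] (sphere e 1) < ⊤ := by
  classical
  set b : ℝ := Real.sqrt (1/(m+1)) with hbdef
  set a : ℝ := Real.sqrt (1 - 1/(m+1)) with hadef
  have hmpos : (0:ℝ) < 1/(m+1) := by positivity
  have hm1 : 1/((m:ℝ)+1) ≤ 1 := by
    rw [div_le_one (by positivity)]; linarith [Nat.cast_nonneg (α := ℝ) m]
  have hb : 0 < b := Real.sqrt_pos.2 hmpos
  have ha : 0 ≤ a := Real.sqrt_nonneg _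
  have hb2 : b^2 = 1/(m+1) := Real.sq_sqrt hmpos.le
  have ha2 : a^2 = 1 - 1/(m+1) := Real.sq_sqrt (by linarith)
  set f : En m → ℝ := fun y => Real.sqrt (1 - ‖y‖^2) with hfdef
  set D : Set (En m) := closedBall (0 : En m) a with hDdef
  set G : Fin (m+1) → Bool → En m → En (m+1) :=
    fun j σ y => e + ins j ((if σ then (1:ℝ) else -1) * f y) y with hGdef
  set K : ℝ≥0 := Real.toNNReal (a/b + 1) with hKdef
  have hKcoe : (K : ℝ) = a/b + 1 := Real.coe_toNNReal _ (by positivity)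
  -- Lipschitz on D
  have hlip : ∀ j σ, LipschitzOnWith K (G j σ) D := by
    intro j σ
    rw [lipschitzOnWith_iff_dist_le_mul]
    intro y hy z hz
    rw [mem_closedBall, dist_zero_right] at hy hz
    have h1y : b^2 ≤ 1 - ‖y‖^2 := by nlinarith [norm_nonneg y]
    have h1z : b^2 ≤ 1 - ‖z‖^2 := by nlinarith [norm_nonneg z]
    have hfd : |f y - f z| ≤ (a/b) * dist y z := by
      have h2 := sqrt_diff_le hb h1y h1z
      have h3 : |(1 - ‖y‖^2) - (1 - ‖z‖^2)| ≤ (2*a) * dist y z := by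
        have h4 : |‖y‖ - ‖z‖| ≤ dist y z := by
          rw [dist_eq_norm]; exact abs_norm_sub_norm_le _ _
        have : (1 - ‖y‖^2) - (1 - ‖z‖^2) = -((‖y‖+‖z‖) * (‖y‖ - ‖z‖)) := by ring
        rw [this, abs_neg, abs_mul]
        have h5 : |‖y‖+‖z‖| ≤ 2*a := by
          rw [abs_of_nonneg (by positivity)]; linarith
        have := abs_nonneg (‖y‖ - ‖z‖)
        nlinarith [dist_nonneg (x := y) (y := z), abs_nonneg (‖y‖+‖z‖)]
      calc |f y - f z| ≤ |(1 - ‖y‖^2) - (1 - ‖z‖^2)| / (2*b) := sqrt_diff_le hb h1y h1z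
        _ ≤ ((2*a) * dist y z) / (2*b) := by
            apply div_le_div_of_nonneg_right h3 (by positivity) |>.trans_eq rfl
        _ = (a/b) * dist y z := by field_simp
    have hd2 : dist (G j σ y) (G j σ z)^2 ≤ ((K:ℝ) * dist y z)^2 := by
      have := dist_ins_sq j ((if σ then (1:ℝ) else -1) * f y) ((if σ then (1:ℝ) else -1) * f z) y z
      have hGe : dist (G j σ y) (G j σ z) = dist (ins j ((if σ then (1:ℝ) else -1) * f y) y) (ins j ((if σ then (1:ℝ) else -1) * f z) z) := dist_add_left _ _ _
      rw [hGe, this]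
      have hsq : ((if σ then (1:ℝ) else -1) * f y - (if σ then (1:ℝ) else -1) * f z)^2 = (f y - f z)^2 := by
        cases σ <;> simp <;> ring
      rw [hsq, hKcoe]
      have h6 : (f y - f z)^2 ≤ ((a/b) * dist y z)^2 := by
        have h := pow_le_pow_left₀ (abs_nonneg (f y - f z)) hfd 2
        rwa [sq_abs] at h
      nlinarith [h6, dist_nonneg (x := y) (y := z), sq_nonneg (dist y z), div_nonneg ha hb.le]
    have h8 : (0:ℝ) ≤ (K:ℝ) * dist y z := by positivity
    have h9 := Real.sqrt_le_sqrt hd2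
    rwa [Real.sqrt_sq dist_nonneg, Real.sqrt_sq h8] at h9
  -- cover
  have hcover : sphere e 1 ⊆ ⋃ (j : Fin (m+1)) (σ : Bool), G j σ '' D := by
    intro x hx
    have hw : ‖x - e‖ = 1 := by rwa [mem_sphere, dist_eq_norm] at hx
    set w : En (m+1) := x - e with hwdef
    have hsum : ∑ k, w k ^2 = 1 := by
      rw [← normsq, hw]; norm_num
    have hj : ∃ j, 1/((m:ℝ)+1) ≤ w j^2 := by
      by_contra h
      push_neg at h
      have hlt : ∑ k, w k ^2 < ∑ _k : Fin (m+1), 1/((m:ℝ)+1) :=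
        Finset.sum_lt_sum_of_nonempty Finset.univ_nonempty (fun k _ => h k)
      rw [Finset.sum_const, Finset.card_univ, Fintype.card_fin, nsmul_eq_mul] at hlt
      rw [hsum] at hlt
      have : ((m:ℝ)+1) * (1/((m:ℝ)+1)) = 1 := by field_simp
      push_cast at hlt
      linarith [hlt, this.symm.le]
    obtain ⟨j, hj⟩ := hj
    set σ : Bool := decide (0 ≤ w j) with hσdef
    set y : En m := proj j w with hydef
    have hyw : ins j (w j) y = w := by
      ext k
      exact congrFun (Fin.insertNth_self_removeNth (α := fun _ => ℝ) j w) k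
    have hy2 : ‖y‖^2 = 1 - w j^2 := by
      rw [normsq]
      have : ∑ i, (y i)^2 = ∑ i, w (j.succAbove i) ^ 2 := rfl
      rw [this]
      have := Fin.sum_univ_succAbove (fun k => w k ^ 2) j
      rw [hsum] at this
      linarith [this]
    have hyD : y ∈ D := by
      rw [hDdef, mem_closedBall, dist_zero_right]
      have h1 : ‖y‖^2 ≤ a^2 := by rw [hy2, ha2]; linarith
      have := Real.sqrt_le_sqrt h1
      rwa [Real.sqrt_sq (norm_nonneg _), Real.sqrt_sq ha] at this
    have hfy : f y = |w j| := by
      rw [hfdef]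
      simp only
      rw [hy2]
      have : 1 - (1 - w j ^2) = w j ^2 := by ring
      rw [this, Real.sqrt_sq_eq_abs]
    have hσf : (if σ then (1:ℝ) else -1) * f y = w j := by
      rw [hfy, hσdef]
      by_cases h0 : 0 ≤ w j
      · simp [h0, abs_of_nonneg h0]
      · push_neg at h0
        simp [not_le.2 h0, abs_of_neg h0]
    refine mem_iUnion.2 ⟨j, mem_iUnion.2 ⟨σ, ⟨y, hyD, ?_⟩⟩⟩
    rw [hGdef]
    simp only
    rw [hσf, hyw, hwdef]
    abel
  -- conclude
  refine lt_of_le_of_lt (measure_mono hcover) ?_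
  refine lt_of_le_of_lt (measure_iUnion_le _) ?_
  rw [tsum_fintype]
  refine ENNReal.sum_lt_top.2 (fun j _ => ?_)
  refine lt_of_le_of_lt (measure_iUnion_le _) ?_
  rw [tsum_fintype]
  refine ENNReal.sum_lt_top.2 (fun σ _ => ?_)
  refine lt_of_le_of_lt ((hlip j σ).hausdorffMeasure_image_le (by positivity)) ?_
  apply ENNReal.mul_lt_top
  · exact ENNReal.rpow_lt_top_of_nonneg (by positivity) ENNReal.coe_ne_top
  · exact (isCompact_closedBall _ _).measure_lt_top

theorem stmt5 (n : ℕ) (hn : 2 ≤ n) :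
    ∃ C : ℝ, 0 < C ∧ ∀ ε ∈ Set.Ioo (0:ℝ) (1/2),
      ∀ e : En n, e = EuclideanSpace.single (⟨n - 1, by omega⟩ : Fin n) (1:ℝ) →
      ∀ s ∈ Set.Icc (0:ℝ) (Real.log (1 / (2 * ε))),
      C * Real.exp ((1 - (n:ℝ)) * s) ≤
        (μH[(n:ℝ)-1] {x ∈ sphere e 1 | s ≤ |(-Real.log ‖x + ε • e‖)|}).toReal := by
  obtain ⟨m, rfl⟩ : ∃ m, n = m + 1 := ⟨n - 1, by omega⟩
  have hvol0 : 0 < μH[(m:ℝ)] (ball (0:En m) 1) := measure_ball_pos _ _ one_pos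
  have hvoltop : μH[(m:ℝ)] (ball (0:En m) 1) < ⊤ := measure_ball_lt_top
  refine ⟨(1/4)^m * (μH[(m:ℝ)] (ball (0 : En m) 1)).toReal, ?_, ?_⟩
  · have := ENNReal.toReal_pos hvol0.ne' hvoltop.ne
    positivity
  intro ε hε e he s hs
  obtain ⟨hε0, hε12⟩ := hε
  obtain ⟨hs0, hs1⟩ := hs
  set j₀ : Fin (m+1) := Fin.last m with hj₀
  have he' : e = EuclideanSpace.single j₀ (1:ℝ) := by
    rw [he]; congr 1
  set r : ℝ := Real.exp (-s) with hrdef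
  have hr0 : 0 < r := Real.exp_pos _
  have hr1 : r ≤ 1 := Real.exp_le_one_iff.2 (by linarith)
  have hεr : 2*ε ≤ r := by
    have h1 : Real.exp s ≤ 1/(2*ε) := by
      have := Real.exp_le_exp.2 hs1
      rwa [Real.exp_log (by positivity)] at this
    have h2 : r * Real.exp s = 1 := by
      rw [hrdef, ← Real.exp_add]; simp
    have h3 : 0 < Real.exp s := Real.exp_pos _
    rw [div_eq_mul_inv, one_mul] at h1
    have h4 : 2*ε * Real.exp s ≤ 2*ε * (2*ε)⁻¹ :=
      mul_le_mul_of_nonneg_left h1 (by positivity)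
    rw [mul_inv_cancel₀ (by positivity)] at h4
    nlinarith [h2, h3, h4, hε0]
  set E : Set (En (m+1)) := {x ∈ sphere e 1 | s ≤ |(-Real.log ‖x + ε • e‖)|} with hEdef
  set B : Set (En m) := closedBall (0:En m) (r/4) with hBdef
  have hsub : ∀ y ∈ B, ins j₀ (1 - Real.sqrt (1 - ‖y‖^2)) y ∈ E := by
    intro y hy
    rw [hBdef, mem_closedBall, dist_zero_right] at hy
    have hy1 : ‖y‖ ≤ 1/4 := by linarith
    have hy0 : 0 ≤ ‖y‖ := norm_nonneg y
    have hu0 : 0 ≤ 1 - ‖y‖^2 := by nlinarith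
    set t : ℝ := Real.sqrt (1 - ‖y‖^2) with htdef
    have ht0 : 0 ≤ t := Real.sqrt_nonneg _
    have htsq : t^2 = 1 - ‖y‖^2 := Real.sq_sqrt hu0
    have ht1 : t ≤ 1 := by nlinarith
    have hc : 1 - t ≤ ‖y‖^2 := by
      have h5 : (1 - ‖y‖^2)^2 ≤ 1 - ‖y‖^2 := by nlinarith
      have h6 := Real.sqrt_le_sqrt h5
      rw [Real.sqrt_sq hu0] at h6
      rw [htdef]; linarith
    -- sphere membership
    have hsphere : ins j₀ (1 - t) y ∈ sphere e 1 := by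
      have hgsub : ins j₀ (1 - t) y - e = ins j₀ (-t) y := by
        ext k
        have hk : ((ins j₀ (1 - t) y - e) : En (m+1)) k = ins j₀ (1 - t) y k - e k := rfl
        rw [hk, he']
        rcases eq_or_ne k j₀ with rfl | hne
        · simp only [ins_apply_same, EuclideanSpace.single_apply, if_pos rfl, if_true]
          norm_num
        · obtain ⟨i, rfl⟩ := Fin.exists_succAbove_eq hne
          simp only [ins_apply_succAbove, EuclideanSpace.single_apply,
            if_neg (Fin.succAbove_ne j₀ i), sub_zero]

      rw [mem_sphere, dist_eq_norm, hgsub]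
      have h7 : ‖ins j₀ (-t) y‖^2 = 1 := by rw [norm_ins_sq]; nlinarith
      have h8 := congrArg Real.sqrt h7
      rwa [Real.sqrt_sq (norm_nonneg _), Real.sqrt_one] at h8
    -- norm bound
    have hgadd : ins j₀ (1 - t) y + ε • e = ins j₀ (1 - t + ε) y := by
      ext k
      have hk : ((ins j₀ (1 - t) y + ε • e) : En (m+1)) k = ins j₀ (1 - t) y k + ε * e k := rfl
      rw [hk, he']
      rcases eq_or_ne k j₀ with rfl | hne
      · simp only [ins_apply_same, EuclideanSpace.single_apply, if_pos rfl, if_true]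
        norm_num
      · obtain ⟨i, rfl⟩ := Fin.exists_succAbove_eq hne
        simp only [ins_apply_succAbove, EuclideanSpace.single_apply,
          if_neg (Fin.succAbove_ne j₀ i), mul_zero, add_zero]
    have hnormsq : ‖ins j₀ (1 - t) y + ε • e‖^2 = (1 - t + ε)^2 + ‖y‖^2 := by
      rw [hgadd, norm_ins_sq]
    have hposs : 0 < ‖ins j₀ (1 - t) y + ε • e‖ := by
      nlinarith [norm_nonneg (ins j₀ (1 - t) y + ε • e), hnormsq, hε0, ht1]
    have hler : ‖ins j₀ (1 - t) y + ε • e‖ ≤ r := by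
      have h9 : ‖ins j₀ (1 - t) y + ε • e‖^2 ≤ r^2 := by nlinarith
      have h10 := Real.sqrt_le_sqrt h9
      rwa [Real.sqrt_sq (norm_nonneg _), Real.sqrt_sq hr0.le] at h10
    have hlog : s ≤ -Real.log ‖ins j₀ (1 - t) y + ε • e‖ := by
      have h11 : Real.log ‖ins j₀ (1 - t) y + ε • e‖ ≤ Real.log r := Real.log_le_log hposs hler
      rw [hrdef, Real.log_exp] at h11
      linarith
    exact ⟨hsphere, le_trans hlog (le_abs_self _)⟩
  have hBsub : B ⊆ proj j₀ '' E := fun z hz =>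
    ⟨ins j₀ (1 - Real.sqrt (1 - ‖z‖^2)) z, hsub z hz,
      PiLp.ext fun i => ins_apply_succAbove j₀ _ z i⟩
  have hd : (0:ℝ) ≤ (m:ℝ) := Nat.cast_nonneg m
  have hchain : μH[(m:ℝ)] B ≤ μH[(m:ℝ)] E := by
    calc μH[(m:ℝ)] B ≤ μH[(m:ℝ)] (proj j₀ '' E) := measure_mono hBsub
      _ ≤ (1:ℝ≥0)^(m:ℝ) * μH[(m:ℝ)] E := (lip_proj j₀).hausdorffMeasure_image_le hd E
      _ = μH[(m:ℝ)] E := by simp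
  have hEtop : μH[(m:ℝ)] E ≠ ⊤ :=
    ((measure_mono (sep_subset _ _)).trans_lt (sphere_fin m e)).ne
  have hBval : μH[(m:ℝ)] B = ENNReal.ofReal ((r/4)^m) * μH[(m:ℝ)] (ball (0:En m) 1) := by
    rw [hBdef, Measure.addHaar_closedBall _ _ (by positivity), finrank_euclideanSpace_fin]
  have hexp : ((m+1:ℕ):ℝ) - 1 = (m:ℝ) := by push_cast; ring
  rw [hexp]
  have hexp2 : Real.exp ((1 - ((m+1:ℕ):ℝ)) * s) = r^m := by
    have : (1 - ((m+1:ℕ):ℝ)) * s = (m:ℕ) * (-s) := by push_cast; ring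
    rw [this, Real.exp_nat_mul]
  rw [hexp2]
  have hBtoReal : (μH[(m:ℝ)] B).toReal = (1/4)^m * (μH[(m:ℝ)] (ball (0:En m) 1)).toReal * r^m := by
    rw [hBval, ENNReal.toReal_mul, ENNReal.toReal_ofReal (by positivity)]
    rw [div_pow, one_div, inv_pow]
    ring
  calc (1/4)^m * (μH[(m:ℝ)] (ball (0:En m) 1)).toReal * r^m = (μH[(m:ℝ)] B).toReal := hBtoReal.symm
    _ ≤ (μH[(m:ℝ)] E).toReal := ENNReal.toReal_mono hEtop hchain
end
end

section
/- There do not exist a constant $C < \infty$ and dimension $n \ge 2$ such that every (not necessarily monotone) $u \in W^{1,n}(B^n) \cap C(B^n)$ with $u(0) = 0$ and $\|\nabla u\|_{L^n(B^n)} \le 1$ satisfies $\tilde u \le C$ a.e. on $S^{n-1}$. More precisely, for every $i \in \mathbb{N}$ there exists $u_i \in W^{1,n}(B^n)$ with $u_i(0) = 0$, $\|\nabla u_i\|_{L^n(B^n)} \le 1$, and radial trace $\tilde u_i(y) \ge i$ for every $y \in S^{n-1}$. -/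
open MeasureTheory Metric Set Filter
open scoped ENNReal Topology

noncomputable section

namespace Stmt18Aux

/-- Basic dyadic bump: `0` for `r ≤ 2⁻¹⁻ᵏ`, `1` for `r ≥ 2⁻ᵏ`, linear in between. -/
def clampf (k : ℕ) (r : ℝ) : ℝ := min 1 (max 0 (2 ^ (k+1) * r - 1))

lemma clampf_cont (k : ℕ) : Continuous (clampf k) := by
  unfold clampf
  exact continuous_const.min (continuous_const.max (by continuity))

lemma clampf_lip (k : ℕ) (r s : ℝ) :
    |clampf k r - clampf k s| ≤ 2 ^ (k+1) * |r - s| := by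
  have h1 : |clampf k r - clampf k s|
      ≤ |max 0 (2 ^ (k+1) * r - 1) - max 0 (2 ^ (k+1) * s - 1)| := by
    have := abs_min_sub_min_le_max (1:ℝ) (max 0 (2 ^ (k+1) * r - 1))
      (1:ℝ) (max 0 (2 ^ (k+1) * s - 1))
    simpa [clampf, abs_nonneg] using this
  have h2 : |max 0 (2 ^ (k+1) * r - 1) - max 0 (2 ^ (k+1) * s - 1)|
      ≤ |(2 ^ (k+1) * r - 1) - (2 ^ (k+1) * s - 1)| := by
    have := abs_max_sub_max_le_max (0:ℝ) (2 ^ (k+1) * r - 1) (0:ℝ) (2 ^ (k+1) * s - 1)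
    simpa using this
  have h3 : |(2 ^ (k+1) * r - 1) - (2 ^ (k+1) * s - 1)| = 2 ^ (k+1) * |r - s| := by
    rw [show (2 ^ (k+1) * r - 1) - (2 ^ (k+1) * s - 1) = 2 ^ (k+1) * (r - s) by ring,
      abs_mul, abs_of_pos (by positivity : (0:ℝ) < 2 ^ (k+1))]
  linarith [h1, h2, h3.le, h3.ge]

lemma clampf_eq_zero {k : ℕ} {r : ℝ} (h : 2 ^ (k+1) * r ≤ 1) : clampf k r = 0 := by
  unfold clampf
  rw [max_eq_left (by linarith), min_eq_right (by norm_num)]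

lemma clampf_eq_one {k : ℕ} {r : ℝ} (h : 2 ≤ 2 ^ (k+1) * r) : clampf k r = 1 := by
  unfold clampf
  rw [max_eq_right (by linarith), min_eq_left (by linarith)]

/-- The radial profile. -/
def phi (i N : ℕ) (r : ℝ) : ℝ := ((i:ℝ)/(N:ℝ)) * ∑ k ∈ Finset.Icc 1 N, clampf k r

lemma phi_cont (i N : ℕ) : Continuous (phi i N) :=
  continuous_const.mul (continuous_finset_sum _ fun k _ => clampf_cont k)

lemma phi_zero (i N : ℕ) : phi i N 0 = 0 := by
  unfold phi
  rw [Finset.sum_eq_zero fun k _ => clampf_eq_zero (by norm_num), mul_zero]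

lemma phi_small {i N : ℕ} {r : ℝ} (h0 : 0 ≤ r) (h : 2 ^ (N+1) * r < 1) : phi i N r = 0 := by
  unfold phi
  rw [Finset.sum_eq_zero, mul_zero]
  intro k hk
  rw [Finset.mem_Icc] at hk
  refine clampf_eq_zero (le_trans ?_ h.le)
  exact mul_le_mul_of_nonneg_right (pow_le_pow_right₀ one_le_two (by omega)) h0

lemma phi_one {i N : ℕ} (hN : 1 ≤ N) {r : ℝ} (hr : 1 < 2 * r) : phi i N r = i := by
  unfold phi
  rw [Finset.sum_congr rfl fun k hk => clampf_eq_one (by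
    rw [Finset.mem_Icc] at hk
    have h4 : (4:ℝ) ≤ 2 ^ (k+1) := by
      calc (4:ℝ) = 2 ^ 2 := by norm_num
      _ ≤ 2 ^ (k+1) := pow_le_pow_right₀ one_le_two (by omega)
    nlinarith)]
  rw [Finset.sum_const, Nat.card_Icc]
  simp only [Nat.add_sub_cancel, nsmul_eq_mul, mul_one]
  field_simp

lemma geo (m : ℕ) : ∑ j ∈ Finset.Icc 1 m, (2:ℝ) ^ (j+1) ≤ 2 ^ (m+2) := by
  induction m with
  | zero => simp
  | succ m ih =>
    rw [Finset.sum_Icc_succ_top (by omega)]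
    have h : (2:ℝ) ^ (m+1+2) = 2 ^ (m+2) + 2 ^ (m+1+1) := by ring
    rw [h]
    exact add_le_add ih le_rfl

lemma cover : ∀ N : ℕ, 1 ≤ N → ∀ t : ℝ, 1 ≤ 2 ^ (N+1) * t → 2 * t ≤ 1 →
    ∃ k, k ∈ Finset.Icc 1 N ∧ 1 ≤ 2 ^ (k+1) * t ∧ 2 ^ (k+1) * t ≤ 2 := by
  intro N
  induction N with
  | zero => omega
  | succ N ih =>
    intro _ t h1 h2
    by_cases hc : 2 ^ (N+1) * t ≤ 1
    · refine ⟨N+1, by simp [Finset.mem_Icc], h1, ?_⟩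
      have h : (2:ℝ) ^ (N+1+1) * t = 2 * (2 ^ (N+1) * t) := by ring
      rw [h]; linarith
    · push_neg at hc
      have hN : 1 ≤ N := by
        by_contra h
        have : N = 0 := by omega
        subst this
        norm_num at hc
        linarith
      obtain ⟨k, hk, h⟩ := ih hN t hc.le h2
      rw [Finset.mem_Icc] at hk
      exact ⟨k, by rw [Finset.mem_Icc]; omega, h⟩

end Stmt18Aux

open Stmt18Aux

theorem stmt18 (n : ℕ) (hn : 2 ≤ n) (i : ℕ) :
    ∃ u ut : En n → ℝ,
      ContinuousOn u (ball (0 : En n) 1) ∧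
      u 0 = 0 ∧
      IntegrableOn (fun x => ‖gradient u x‖ ^ n) (ball (0 : En n) 1) ∧
      (∫ x in ball (0 : En n) 1, ‖gradient u x‖ ^ n) ^ (1/(n:ℝ)) ≤ 1 ∧
      (∀ y ∈ sphere (0 : En n) 1,
        Tendsto (fun r : ℝ => u (r • y)) (𝓝[<] 1) (𝓝 (ut y))) ∧
      (∀ y ∈ sphere (0 : En n) 1, (i:ℝ) ≤ ut y) := by
  classical
  set V : ℝ := (volume (ball (0 : En n) 1)).toReal with hVdef
  have hV0 : 0 ≤ V := ENNReal.toReal_nonneg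
  set N : ℕ := (8*(i+1))^n * (Nat.ceil V + 1) with hNdef
  have hN1 : 1 ≤ N := Nat.one_le_iff_ne_zero.mpr (by positivity)
  have hNR : (0:ℝ) < (N:ℝ) := by exact_mod_cast hN1
  set u : En n → ℝ := fun x => phi i N ‖x‖ with hu
  set K : ℕ → ℝ := fun k => (i:ℝ)/(N:ℝ) * 2 ^ (k+3) with hK
  set A : ℕ → Set (En n) := fun k => {x | 1 ≤ 2 ^ (k+1) * ‖x‖ ∧ 2 ^ (k+1) * ‖x‖ ≤ 2} with hA
  set B : En n → ℝ :=
    fun x => ∑ k ∈ Finset.Icc 1 N, (A k).indicator (fun _ => (K k)^n) x with hB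
  have hKn : ∀ k, 0 ≤ K k := fun k => by rw [hK]; positivity
  -- gradient norm = fderiv norm
  have hgrad : ∀ x : En n, ‖gradient u x‖ = ‖fderiv ℝ u x‖ := fun x => by
    show ‖(InnerProductSpace.toDual ℝ (En n)).symm (fderiv ℝ u x)‖ = ‖fderiv ℝ u x‖
    exact LinearIsometryEquiv.norm_map _ _
  -- Lipschitz bound on dyadic annuli
  have hlip : ∀ k ∈ Finset.Icc 1 N, ∀ x : En n,
      1 ≤ 2 ^ (k+1) * ‖x‖ → 2 ^ (k+1) * ‖x‖ ≤ 2 → ‖fderiv ℝ u x‖ ≤ K k := by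
    intro k _ x hx1 _
    refine norm_fderiv_le_of_lip' ℝ (hKn k) ?_
    have hopen : IsOpen {y : En n | 1 < 2 ^ (k+2) * ‖y‖} :=
      isOpen_lt continuous_const (continuous_const.mul continuous_norm)
    have hmem : x ∈ {y : En n | 1 < 2 ^ (k+2) * ‖y‖} := by
      show 1 < 2 ^ (k+2) * ‖x‖
      have h : (2:ℝ) ^ (k+2) * ‖x‖ = 2 * (2 ^ (k+1) * ‖x‖) := by ring
      rw [h]; linarith
    filter_upwards [hopen.mem_nhds hmem] with y hy
    have hy' : 1 < 2 ^ (k+2) * ‖y‖ := hy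
    have hx' : 1 < 2 ^ (k+2) * ‖x‖ := hmem
    -- term-by-term bound
    have hterm : ∀ j ∈ Finset.Icc 1 N, |clampf j ‖y‖ - clampf j ‖x‖|
        ≤ (if j ≤ k+1 then (2:ℝ) ^ (j+1) else 0) * ‖y - x‖ := by
      intro j _
      by_cases hj : j ≤ k+1
      · rw [if_pos hj]
        calc |clampf j ‖y‖ - clampf j ‖x‖| ≤ 2 ^ (j+1) * |‖y‖ - ‖x‖| := clampf_lip j _ _
        _ ≤ 2 ^ (j+1) * ‖y - x‖ :=
            mul_le_mul_of_nonneg_left (abs_norm_sub_norm_le y x) (by positivity)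
      · rw [if_neg hj]
        obtain ⟨m, hm⟩ := Nat.exists_eq_add_of_le (show k+2 ≤ j by omega)
        have hone : ∀ z : En n, 1 < 2 ^ (k+2) * ‖z‖ → clampf j ‖z‖ = 1 := by
          intro z hz
          refine clampf_eq_one ?_
          have h2m : (2:ℝ) ≤ 2 ^ (m+1) := by
            calc (2:ℝ) = 2 ^ 1 := by norm_num
            _ ≤ 2 ^ (m+1) := pow_le_pow_right₀ one_le_two (by omega)
          have heq : (2:ℝ) ^ (j+1) * ‖z‖ = 2 ^ (m+1) * (2 ^ (k+2) * ‖z‖) := by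
            subst hm; ring
          rw [heq]
          nlinarith
        rw [hone y hy', hone x hx', sub_self, abs_zero, zero_mul]
    have hsum : ∑ j ∈ Finset.Icc 1 N, |clampf j ‖y‖ - clampf j ‖x‖|
        ≤ (∑ j ∈ Finset.Icc 1 N, if j ≤ k+1 then (2:ℝ) ^ (j+1) else 0) * ‖y - x‖ := by
      rw [Finset.sum_mul]
      exact Finset.sum_le_sum hterm
    have hgeo : (∑ j ∈ Finset.Icc 1 N, if j ≤ k+1 then (2:ℝ) ^ (j+1) else 0)
        ≤ 2 ^ (k+3) := by
      rw [← Finset.sum_filter]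
      calc ∑ j ∈ (Finset.Icc 1 N).filter (· ≤ k+1), (2:ℝ) ^ (j+1)
          ≤ ∑ j ∈ Finset.Icc 1 (k+1), (2:ℝ) ^ (j+1) := by
            refine Finset.sum_le_sum_of_subset_of_nonneg ?_ (fun _ _ _ => by positivity)
            intro j hj
            simp only [Finset.mem_filter, Finset.mem_Icc] at hj ⊢
            omega
      _ ≤ 2 ^ (k+1+2) := geo (k+1)
      _ = 2 ^ (k+3) := by ring_nf
    have hdiff : u y - u x
        = (i:ℝ)/(N:ℝ) * (∑ j ∈ Finset.Icc 1 N, (clampf j ‖y‖ - clampf j ‖x‖)) := by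
      show phi i N ‖y‖ - phi i N ‖x‖ = _
      unfold phi
      rw [← mul_sub, ← Finset.sum_sub_distrib]
    have hiN : (0:ℝ) ≤ (i:ℝ)/(N:ℝ) := by positivity
    calc ‖u y - u x‖ = |u y - u x| := Real.norm_eq_abs _
    _ = (i:ℝ)/(N:ℝ) * |∑ j ∈ Finset.Icc 1 N, (clampf j ‖y‖ - clampf j ‖x‖)| := by
        rw [hdiff, abs_mul, abs_of_nonneg hiN]
    _ ≤ (i:ℝ)/(N:ℝ) * (∑ j ∈ Finset.Icc 1 N, |clampf j ‖y‖ - clampf j ‖x‖|) :=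
        mul_le_mul_of_nonneg_left (Finset.abs_sum_le_sum_abs _ _) hiN
    _ ≤ (i:ℝ)/(N:ℝ) * ((∑ j ∈ Finset.Icc 1 N, if j ≤ k+1 then (2:ℝ) ^ (j+1) else 0)
          * ‖y - x‖) := mul_le_mul_of_nonneg_left hsum hiN
    _ ≤ (i:ℝ)/(N:ℝ) * (2 ^ (k+3) * ‖y - x‖) := by
        refine mul_le_mul_of_nonneg_left ?_ hiN
        exact mul_le_mul_of_nonneg_right hgeo (norm_nonneg _)
    _ = K k * ‖y - x‖ := by rw [hK]; ring
  -- zero derivative on the two constancy regions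
  have hconst0 : ∀ x : En n, 2 ^ (N+1) * ‖x‖ < 1 → fderiv ℝ u x = 0 := by
    intro x hx
    have hopen : IsOpen {y : En n | 2 ^ (N+1) * ‖y‖ < 1} :=
      isOpen_lt (continuous_const.mul continuous_norm) continuous_const
    have hev : u =ᶠ[𝓝 x] fun _ => (0:ℝ) := by
      filter_upwards [hopen.mem_nhds hx] with y hy
      exact phi_small (norm_nonneg y) hy
    rw [hev.fderiv_eq]
    exact fderiv_const_apply 0
  have hconst1 : ∀ x : En n, 1 < 2 * ‖x‖ → fderiv ℝ u x = 0 := by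
    intro x hx
    have hopen : IsOpen {y : En n | 1 < 2 * ‖y‖} :=
      isOpen_lt continuous_const (continuous_const.mul continuous_norm)
    have hev : u =ᶠ[𝓝 x] fun _ => (i:ℝ) := by
      filter_upwards [hopen.mem_nhds hx] with y hy
      exact phi_one hN1 hy
    rw [hev.fderiv_eq]
    exact fderiv_const_apply _
  have hBnn : ∀ x, 0 ≤ B x := fun x =>
    Finset.sum_nonneg fun k _ => Set.indicator_nonneg (fun _ _ => pow_nonneg (hKn k) n) x
  -- pointwise domination
  have hbound : ∀ x : En n, ‖fderiv ℝ u x‖ ^ n ≤ B x := by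
    intro x
    by_cases h1 : 2 ^ (N+1) * ‖x‖ < 1
    · rw [hconst0 x h1]
      simpa [zero_pow (by omega : n ≠ 0)] using hBnn x
    by_cases h2 : 1 < 2 * ‖x‖
    · rw [hconst1 x h2]
      simpa [zero_pow (by omega : n ≠ 0)] using hBnn x
    push_neg at h1 h2
    obtain ⟨k, hk, ha, hb⟩ := cover N hN1 ‖x‖ h1 h2
    have hfd := hlip k hk x ha hb
    have hBk : (K k) ^ n ≤ B x := by
      have hxA : x ∈ A k := ⟨ha, hb⟩
      calc (K k) ^ n = (A k).indicator (fun _ => (K k)^n) x :=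
          (Set.indicator_of_mem hxA (fun _ => (K k)^n)).symm
      _ ≤ B x := Finset.single_le_sum
          (f := fun j => (A j).indicator (fun _ => (K j)^n) x)
          (fun j _ => Set.indicator_nonneg (fun _ _ => pow_nonneg (hKn j) n) x) hk
    exact le_trans (pow_le_pow_left₀ (norm_nonneg _) hfd n) hBk
  have fmeas : Measurable fun x : En n => ‖fderiv ℝ u x‖ ^ n :=
    ((measurable_fderiv ℝ u).norm).pow_const n
  have hAmeas : ∀ k, MeasurableSet (A k) := by
    intro k
    have : A k = (fun x : En n => 2 ^ (k+1) * ‖x‖) ⁻¹' (Icc 1 2) := by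
      ext x; simp [hA, mem_Icc]
    rw [this]
    exact (isClosed_Icc.preimage (continuous_const.mul continuous_norm)).measurableSet
  have hAsub : ∀ k, A k ⊆ closedBall (0 : En n) (2 / 2 ^ (k+1)) := by
    intro k x hx
    rw [mem_closedBall, dist_zero_right, le_div_iff₀ (by positivity : (0:ℝ) < 2 ^ (k+1))]
    rw [mul_comm]
    exact hx.2
  have hAfin : ∀ k, volume (A k) < ⊤ := fun k =>
    lt_of_le_of_lt (measure_mono (hAsub k)) measure_closedBall_lt_top
  have hBint : Integrable B volume := by
    rw [hB]
    refine integrable_finset_sum _ fun k _ => ?_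
    rw [integrable_indicator_iff (hAmeas k)]
    exact integrableOn_const (hAfin k).ne
  have hIf : IntegrableOn (fun x => ‖fderiv ℝ u x‖ ^ n) (ball (0 : En n) 1) volume := by
    refine Integrable.mono' hBint.integrableOn
      (fmeas.aestronglyMeasurable.restrict) (ae_of_all _ fun x => ?_)
    rw [Real.norm_eq_abs, abs_of_nonneg (pow_nonneg (norm_nonneg _) n)]
    exact hbound x
  -- volume computation
  have hvol : ∀ k, (volume (A k)).toReal ≤ (2 / 2 ^ (k+1) : ℝ) ^ n * V := by
    intro k
    have hcb : volume (closedBall (0 : En n) (2 / 2 ^ (k+1)))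
        = ENNReal.ofReal ((2 / 2 ^ (k+1) : ℝ) ^ n) * volume (ball (0 : En n) 1) := by
      have := Measure.addHaar_closedBall (μ := (volume : Measure (En n))) 0
        (r := (2 / 2 ^ (k+1) : ℝ)) (by positivity)
      rwa [finrank_euclideanSpace_fin] at this
    calc (volume (A k)).toReal ≤ (volume (closedBall (0 : En n) (2 / 2 ^ (k+1)))).toReal := by
          refine ENNReal.toReal_mono measure_closedBall_lt_top.ne (measure_mono (hAsub k))
    _ = (2 / 2 ^ (k+1) : ℝ) ^ n * V := by
        rw [hcb, ENNReal.toReal_mul, ENNReal.toReal_ofReal (by positivity), hVdef]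
  -- the integral bound
  have hInt : ∫ x in ball (0 : En n) 1, ‖fderiv ℝ u x‖ ^ n ≤ 1 := by
    have step1 : ∫ x in ball (0 : En n) 1, ‖fderiv ℝ u x‖ ^ n
        ≤ ∫ x in ball (0 : En n) 1, B x :=
      setIntegral_mono_on hIf hBint.integrableOn measurableSet_ball fun x _ => hbound x
    have step2 : ∫ x in ball (0 : En n) 1, B x ≤ ∫ x, B x :=
      setIntegral_le_integral hBint (ae_of_all _ hBnn)
    have step3 : ∫ x, B x = ∑ k ∈ Finset.Icc 1 N, (volume (A k)).toReal * (K k) ^ n := by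
      rw [hB, integral_finset_sum _ (fun k _ =>
        (integrable_indicator_iff (hAmeas k)).mpr
          (integrableOn_const (hAfin k).ne))]
      refine Finset.sum_congr rfl fun k _ => ?_
      rw [integral_indicator_const _ (hAmeas k)]
      simp [smul_eq_mul, measureReal_def]
    have step4 : ∑ k ∈ Finset.Icc 1 N, (volume (A k)).toReal * (K k) ^ n
        ≤ ∑ k ∈ Finset.Icc 1 N, (8*(i:ℝ)/(N:ℝ)) ^ n * V := by
      refine Finset.sum_le_sum fun k _ => ?_
      have h1 : (volume (A k)).toReal * (K k) ^ n
          ≤ ((2 / 2 ^ (k+1) : ℝ) ^ n * V) * (K k) ^ n :=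
        mul_le_mul_of_nonneg_right (hvol k) (pow_nonneg (hKn k) n)
      have h2 : ((2 / 2 ^ (k+1) : ℝ) ^ n * V) * (K k) ^ n
          = ((2 / 2 ^ (k+1) : ℝ) * K k) ^ n * V := by rw [mul_pow]; ring
      have h3 : (2 / 2 ^ (k+1) : ℝ) * K k = 8*(i:ℝ)/(N:ℝ) := by
        rw [hK]
        field_simp
        ring
      rw [h2, h3] at h1
      exact h1
    have step5 : ∑ k ∈ Finset.Icc 1 N, (8*(i:ℝ)/(N:ℝ)) ^ n * V
        = (N:ℝ) * ((8*(i:ℝ)/(N:ℝ)) ^ n * V) := by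
      rw [Finset.sum_const, Nat.card_Icc, Nat.add_sub_cancel, nsmul_eq_mul]
    have final : (N:ℝ) * ((8*(i:ℝ)/(N:ℝ)) ^ n * V) ≤ 1 := by
      have hkey : (8*(i:ℝ)) ^ n * V ≤ (N:ℝ) := by
        have hi : (8*(i:ℝ)) ^ n ≤ (8*((i:ℝ)+1)) ^ n :=
          pow_le_pow_left₀ (by positivity) (by linarith) n
        have hv : V ≤ (Nat.ceil V : ℝ) + 1 := by
          have := Nat.le_ceil V
          linarith
        calc (8*(i:ℝ)) ^ n * V ≤ (8*((i:ℝ)+1)) ^ n * ((Nat.ceil V : ℝ) + 1) :=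
            mul_le_mul hi hv hV0 (by positivity)
        _ = (N:ℝ) := by rw [hNdef]; push_cast; ring
      have hmono : (N:ℝ) ≤ (N:ℝ) ^ (n-1) :=
        le_self_pow₀ (by exact_mod_cast hN1) (by omega)
      have hpow : (N:ℝ) ^ (n-1) * (N:ℝ) = (N:ℝ) ^ n := by
        rw [← pow_succ]
        congr 1
        omega
      have hNn : (0:ℝ) < (N:ℝ) ^ (n-1) := by positivity
      have heq : (N:ℝ) * ((8*(i:ℝ)/(N:ℝ)) ^ n * V)
          = ((8*(i:ℝ)) ^ n * V) / (N:ℝ) ^ (n-1) := by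
        rw [div_pow, eq_div_iff (ne_of_gt hNn)]
        field_simp
        rw [← hpow]
        ring
      rw [heq, div_le_one hNn]
      exact hkey.trans hmono
    calc ∫ x in ball (0 : En n) 1, ‖fderiv ℝ u x‖ ^ n ≤ ∫ x, B x := step1.trans step2
    _ ≤ 1 := by rw [step3]; rw [step5] at step4; exact step4.trans final
  have hfun : (fun x => ‖gradient u x‖ ^ n) = fun x : En n => ‖fderiv ℝ u x‖ ^ n :=
    funext fun x => by rw [hgrad x]
  refine ⟨u, fun _ => (i:ℝ), ?_, ?_, ?_, ?_, ?_, fun y _ => le_refl _⟩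
  · exact ((phi_cont i N).comp continuous_norm).continuousOn
  · show phi i N ‖(0 : En n)‖ = 0
    rw [norm_zero, phi_zero]
  · rw [hfun]; exact hIf
  · rw [hfun]
    refine Real.rpow_le_one ?_ hInt (by positivity)
    exact integral_nonneg fun x => pow_nonneg (norm_nonneg _) n
  · intro y hy
    have hy1 : ‖y‖ = 1 := by
      rwa [mem_sphere_zero_iff_norm] at hy
    refine Tendsto.congr' ?_ tendsto_const_nhds
    filter_upwards [Ioo_mem_nhdsLT_of_mem
      (show (1:ℝ) ∈ Ioc (1/2) 1 by constructor <;> norm_num)] with r hr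
    have hrpos : (0:ℝ) < r := lt_trans (by norm_num) hr.1
    have hnorm : ‖r • y‖ = r := by
      rw [norm_smul, hy1, mul_one, Real.norm_eq_abs, abs_of_pos hrpos]
    show (i:ℝ) = phi i N ‖r • y‖
    rw [hnorm, phi_one hN1 (by linarith [hr.1])]
end
end
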